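/- arXiv:2408.07417 — 5 statements merged into one kernel-verified Lean document; each statement's English description precedes it below -/
import Mathlib

section
/- Let n ∈ ℕ, let p : Fin n → ℝ be processing times, let σ be a permutation of Fin n, and let u < v be two positions in Fin n. Let σ' = σ ∘ (swap u v) be the schedule obtained by exchanging the jobs in positions u and v. Then C_{σ'}(k) = C_σ(k) + p(σ v) − p(σ u) for every position k with u ≤ k < v, C_{σ'}(k) = C_σ(k) for every position k with k < u or k ≥ v, and consequently (∑_{k} C_{σ'}(k)) − (∑_{k} C_σ(k)) = (v − u)·(p(σ v) − p(σ u)). In particular, if p(σ v) ≤ p(σ u), moving the shorter job earlier does not increase any completion time and does not increase the total completion time. -/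
/-- Non-adjacent interchange identity: swapping the jobs in positions `u < v`
shifts every completion time in positions `u ≤ k < v` by `p (σ v) - p (σ u)`,
leaves all other completion times unchanged, and changes the total completion
time by `(v - u) * (p (σ v) - p (σ u))`.  In particular, when `p (σ v) ≤ p (σ u)`,
no completion time increases, and neither does the total. -/
theorem swap_completion_times
    (n : ℕ) (p : Fin n → ℝ) (σ : Equiv.Perm (Fin n))
    (u v : Fin n) (huv : u < v) :
    ∀ σ' : Equiv.Perm (Fin n), σ' = (Equiv.swap u v).trans σ →
    ∀ C : Equiv.Perm (Fin n) → Fin n → ℝ,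
      C = (fun τ k => ∑ j ∈ Finset.Iic k, p (τ j)) →
    (∀ k : Fin n, u ≤ k → k < v → C σ' k = C σ k + p (σ v) - p (σ u)) ∧
    (∀ k : Fin n, k < u ∨ v ≤ k → C σ' k = C σ k) ∧
    (∑ k, C σ' k) - (∑ k, C σ k) =
      (((v : ℕ) - (u : ℕ) : ℕ) : ℝ) * (p (σ v) - p (σ u)) ∧
    (p (σ v) ≤ p (σ u) →
      (∀ k : Fin n, C σ' k ≤ C σ k) ∧ (∑ k, C σ' k) ≤ (∑ k, C σ k)) := by
  rintro σ' rfl C rfl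
  have hmid : ∀ k : Fin n, u ≤ k → k < v →
      (∑ j ∈ Finset.Iic k, p (((Equiv.swap u v).trans σ) j))
        = (∑ j ∈ Finset.Iic k, p (σ j)) + p (σ v) - p (σ u) := by
    intro k hu hv
    have h : ∀ j ∈ Finset.Iic k,
        p (((Equiv.swap u v).trans σ) j) - p (σ j)
          = if j = u then p (σ v) - p (σ u) else 0 := by
      intro j hj
      simp only [Finset.mem_Iic] at hj
      by_cases hju : j = u
      · subst hju; simp [Equiv.swap_apply_left]
      · have hjv : j ≠ v := fun h => absurd (h ▸ hj) (not_le.2 hv)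
        simp [hju, Equiv.swap_apply_of_ne_of_ne hju hjv]
    have := Finset.sum_congr rfl h
    rw [Finset.sum_sub_distrib] at this
    rw [Finset.sum_ite_eq' (Finset.Iic k) u (fun _ => p (σ v) - p (σ u)),
      if_pos (Finset.mem_Iic.2 hu)] at this
    linarith
  have hout : ∀ k : Fin n, k < u ∨ v ≤ k →
      (∑ j ∈ Finset.Iic k, p (((Equiv.swap u v).trans σ) j))
        = (∑ j ∈ Finset.Iic k, p (σ j)) := by
    rintro k (hk | hk)
    · refine Finset.sum_congr rfl fun j hj => ?_
      simp only [Finset.mem_Iic] at hj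
      have hju : j ≠ u := fun h => absurd (h ▸ hj) (not_le.2 hk)
      have hjv : j ≠ v := by
        rintro rfl; exact absurd (hj.trans_lt (hk.trans huv)) (lt_irrefl _)
      simp [Equiv.swap_apply_of_ne_of_ne hju hjv]
    · refine Finset.sum_nbij' (fun j => Equiv.swap u v j) (fun j => Equiv.swap u v j)
        ?_ ?_ (by simp) (by simp) (by simp)
      all_goals
        intro j hj
        simp only [Finset.mem_Iic] at hj ⊢
        by_cases h1 : j = u
        · simpa [h1, Equiv.swap_apply_left] using hk
        by_cases h2 : j = v
        · simp [h2, Equiv.swap_apply_right]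
          exact le_trans huv.le (h2 ▸ hj)
        · simpa [Equiv.swap_apply_of_ne_of_ne h1 h2] using hj
    -- done
  refine ⟨hmid, hout, ?_, ?_⟩
  · rw [← Finset.sum_sub_distrib]
    have h : ∀ k : Fin n,
        (∑ j ∈ Finset.Iic k, p (((Equiv.swap u v).trans σ) j))
          - (∑ j ∈ Finset.Iic k, p (σ j))
          = if k ∈ Finset.Ico u v then p (σ v) - p (σ u) else 0 := by
      intro k
      by_cases hk : k ∈ Finset.Ico u v
      · rw [Finset.mem_Ico] at hk
        rw [hmid k hk.1 hk.2, if_pos (Finset.mem_Ico.2 hk)]; ring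
      · have hk' : k < u ∨ v ≤ k := by
          rw [Finset.mem_Ico, not_and_or, not_le, not_lt] at hk; exact hk
        rw [hout k hk', if_neg hk, sub_self]
    rw [Finset.sum_congr rfl fun k _ => h k, Finset.sum_ite_mem,
      Finset.univ_inter, Finset.sum_const, nsmul_eq_mul, Fin.card_Ico]
  · intro hle
    have key : ∀ k : Fin n,
        (∑ j ∈ Finset.Iic k, p (((Equiv.swap u v).trans σ) j))
          ≤ (∑ j ∈ Finset.Iic k, p (σ j)) := by
      intro k
      by_cases hk : u ≤ k ∧ k < v
      · rw [hmid k hk.1 hk.2]; linarith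
      · rw [not_and_or, not_le, not_lt] at hk
        rw [hout k hk]
    exact ⟨key, Finset.sum_le_sum fun k _ => key k⟩
end

section
/- Let t, p_i, p_j, d_i, d_j be real numbers with 0 ≤ p_i, 0 ≤ p_j, p_i ≤ p_j, and d_i ≤ d_j. Then scheduling the job with smaller processing time and earlier due date first, starting at time t, gives total tardiness no larger than the opposite order: max(0, t + p_i − d_i) + max(0, t + p_i + p_j − d_j) ≤ max(0, t + p_j − d_j) + max(0, t + p_i + p_j − d_i). -/
/-- Adjacent-interchange inequality for two agreeable jobs: if job `i` has both
the smaller processing time and the earlier due date, processing it first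
(starting at time `t`) yields total tardiness no larger than the opposite
order. -/
theorem two_job_agreeable_interchange
    (t pi pj di dj : ℝ)
    (hpi : 0 ≤ pi) (hpj : 0 ≤ pj) (hp : pi ≤ pj) (hd : di ≤ dj) :
    max 0 (t + pi - di) + max 0 (t + pi + pj - dj) ≤
      max 0 (t + pj - dj) + max 0 (t + pi + pj - di) := by
  rcases le_total 0 (t + pi - di) with h1 | h1 <;>
  rcases le_total 0 (t + pi + pj - dj) with h2 | h2 <;>
  simp [max_eq_left, max_eq_right, h1, h2] <;>
  · nlinarith [le_max_left 0 (t + pj - dj), le_max_right 0 (t + pj - dj),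
      le_max_left 0 (t + pi + pj - di), le_max_right 0 (t + pi + pj - di)]
end

section
/- Let n ∈ ℕ and let p, d : Fin n → ℝ with 0 ≤ p j for all j, p monotone nondecreasing, and d monotone nondecreasing (the jobs are 'agreeable': indexed simultaneously in nondecreasing processing-time and nondecreasing due-date order). Then the identity schedule minimizes total tardiness: for every permutation σ of Fin n, ∑_{k} max(0, C_id(k) − d k) ≤ ∑_{k} max(0, C_σ(k) − d(σ k)), where C_id(k) = ∑_{j ≤ k} p j and C_σ(k) = ∑_{j ≤ k} p(σ j). -/
/-!
Under any schedule the first `k + 1` positions hold `k + 1` jobs, whose total processing time is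
at least that of the `k + 1` shortest ones, so completion times can only grow compared with the
identity schedule. With the (nondecreasing) completion times of a schedule fixed, the cost
`max 0 (C - d)` is a Monge array in `(C, d)` because `max 0` is convex, so matching due dates in
nondecreasing order is optimal: swapping the largest misplaced due date into its position never
increases the cost and shrinks the support of the permutation.
-/

open Finset Equiv

variable {ι M : Type*}

section Sums

variable [AddCommMonoid M] [PartialOrder M]

theorem Finset.sum_le_sum_of_card_eq_of_forall_le [IsOrderedAddMonoid M] {f : ι → M}
    {s t : Finset ι} (hst : #s = #t) (h : ∀ i ∈ s, ∀ j ∈ t, f i ≤ f j) :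
    ∑ i ∈ s, f i ≤ ∑ j ∈ t, f j := by
  classical
  induction s using Finset.induction_on generalizing t with
  | empty => simp [card_eq_zero.1 hst.symm]
  | insert i s hi ih =>
    obtain ⟨j, hj⟩ : t.Nonempty := card_pos.1 (hst ▸ card_pos.2 (insert_nonempty i s))
    rw [sum_insert hi, ← add_sum_erase t f hj]
    refine add_le_add (h i (mem_insert_self i s) j hj) (ih ?_ fun i' hi' j' hj' => ?_)
    · rw [card_erase_of_mem hj, ← hst, card_insert_of_notMem hi, Nat.add_sub_cancel]
    · exact h i' (mem_insert_of_mem hi') j' (mem_of_mem_erase hj')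

theorem Monotone.sum_le_sum_of_isLowerSet [IsOrderedCancelAddMonoid M] [LinearOrder ι]
    {f : ι → M} (hf : Monotone f) {s t : Finset ι} (hs : IsLowerSet (s : Set ι))
    (hst : #s = #t) : ∑ i ∈ s, f i ≤ ∑ j ∈ t, f j := by
  rw [← sum_sdiff_le_sum_sdiff]
  refine sum_le_sum_of_card_eq_of_forall_le ?_ fun i hi j hj => hf ?_
  · rw [card_sdiff_comm hst]
  · exact le_of_not_ge fun hji => (mem_sdiff.1 hj).2 (hs hji (mem_sdiff.1 hi).1)

theorem Monotone.sum_Iic_le_sum_Iic_comp_perm [IsOrderedCancelAddMonoid M] [LinearOrder ι]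
    [LocallyFiniteOrderBot ι] {f : ι → M} (hf : Monotone f) (σ : Perm ι) (k : ι) :
    ∑ j ∈ Iic k, f j ≤ ∑ j ∈ Iic k, f (σ j) := by
  rw [← coe_toEmbedding, ← sum_map]
  exact hf.sum_le_sum_of_isLowerSet (by simpa using isLowerSet_Iic k) (card_map _).symm

theorem Fintype.sum_le_sum_of_eq_off_pair [IsOrderedAddMonoid M] [Fintype ι] [DecidableEq ι]
    {f g : ι → M} {a b : ι} (hab : a ≠ b) (h : ∀ i, i ≠ a → i ≠ b → f i = g i)
    (hle : f a + f b ≤ g a + g b) : ∑ i, f i ≤ ∑ i, g i := by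
  have hb : b ∈ univ.erase a := mem_erase.2 ⟨hab.symm, mem_univ b⟩
  rw [← add_sum_erase _ f (mem_univ a), ← add_sum_erase _ f hb, ← add_sum_erase _ g (mem_univ a),
    ← add_sum_erase _ g hb, ← add_assoc, ← add_assoc]
  refine add_le_add hle (Finset.sum_congr rfl fun i hi => ?_).le
  obtain ⟨hib, hi⟩ := mem_erase.1 hi
  exact h i (mem_erase.1 hi).1 hib

end Sums

section Monge

def IsMonge [Preorder ι] [Add M] [LE M] (c : ι → ι → M) : Prop :=
  ∀ ⦃i i' j j'⦄, i ≤ i' → j ≤ j' → c i j + c i' j' ≤ c i j' + c i' j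

theorem IsMonge.sum_le_sum_perm [LinearOrder ι] [Fintype ι] [AddCommMonoid M] [PartialOrder M]
    [IsOrderedAddMonoid M] {c : ι → ι → M} (hc : IsMonge c) (σ : Perm ι) :
    ∑ i, c i i ≤ ∑ i, c i (σ i) := by
  induction hn : #σ.support using Nat.strong_induction_on generalizing σ with
  | _ n ih =>
  obtain rfl | hσ := eq_or_ne σ 1
  · simp
  set x := σ.support.max' (nonempty_iff_ne_empty.2 (mt Perm.support_eq_empty_iff.1 hσ))
  have hx : x ∈ σ.support := max'_mem _ _
  set m := σ.symm x
  have hxm : σ m = x := σ.apply_symm_apply x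
  have hσx : σ x < x :=
    lt_of_le_of_ne (le_max' _ _ (Perm.apply_mem_support.2 hx)) (Perm.mem_support.1 hx)
  have hmx : m ≠ x := fun h => Perm.mem_support.1 hx (h ▸ hxm)
  have hm : m < x := lt_of_le_of_ne (le_max' _ _ (Perm.mem_support.2 (hxm ▸ hmx.symm))) hmx
  calc ∑ i, c i i ≤ ∑ i, c i ((swap x (σ x) * σ) i) :=
        ih _ (hn ▸ Perm.card_support_swap_mul (Perm.mem_support.1 hx)) _ rfl
    _ ≤ ∑ i, c i (σ i) := by
      refine Fintype.sum_le_sum_of_eq_off_pair hm.ne (fun i him hix => ?_) ?_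
      · rw [Perm.mul_apply, swap_apply_of_ne_of_ne (hxm ▸ σ.injective.ne him) (σ.injective.ne hix)]
      · simp only [Perm.mul_apply, hxm, swap_apply_left, swap_apply_right]
        exact hc hm.le hσx.le

theorem isMonge_max_zero_sub [Preorder ι] {a b : ι → ℝ} (ha : Monotone a) (hb : Monotone b) :
    IsMonge fun i j => max 0 (a i - b j) := by
  intro i i' j j' hi hj
  have := ha hi
  have := hb hj
  grind

end Monge

/-- For agreeable jobs (indexed simultaneously in nondecreasing processing-time
and nondecreasing due-date order, with nonnegative processing times), the
identity schedule minimizes total tardiness. -/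
theorem agreeable_jobs_identity_minimizes_total_tardiness
    (n : ℕ) (p d : Fin n → ℝ)
    (hp0 : ∀ j, 0 ≤ p j) (hp : Monotone p) (hd : Monotone d)
    (σ : Equiv.Perm (Fin n)) :
    (∑ k : Fin n, max 0 ((∑ j ∈ Finset.Iic k, p j) - d k)) ≤
      (∑ k : Fin n, max 0 ((∑ j ∈ Finset.Iic k, p (σ j)) - d (σ k))) := by
  have hC : Monotone fun k => ∑ j ∈ Iic k, p (σ j) := fun k k' hk =>
    sum_le_sum_of_subset_of_nonneg (Iic_subset_Iic.2 hk) fun j _ _ => hp0 (σ j)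
  calc ∑ k, max 0 (∑ j ∈ Iic k, p j - d k)
      ≤ ∑ k, max 0 (∑ j ∈ Iic k, p (σ j) - d k) := sum_le_sum fun k _ =>
        max_le_max_left 0 (sub_le_sub_right (hp.sum_Iic_le_sum_Iic_comp_perm σ k) _)
    _ ≤ ∑ k, max 0 (∑ j ∈ Iic k, p (σ j) - d (σ k)) :=
        (isMonge_max_zero_sub hC hd).sum_le_sum_perm σ
end

section
/- Let n, V ∈ ℕ with V ≥ 1 be the numbers of trips and vehicles, let a : Fin n → Fin V assign each trip to a vehicle, let t : Fin n → ℝ with 0 ≤ t l be the driving duration of each trip, let d : Fin n → ℝ be the departure times, and let lb : Fin n → ℝ be lower bounds with lb l ≤ d l for all l. Assume (i) departures respect the trip sequence: d i ≤ d j whenever i ≤ j; and (ii) a vehicle can start a trip only after returning from its previous trip: if a i = a j and i < j then d i + t i ≤ d j. Then for every trip index m with V ≤ m, there exists an index l with m − V ≤ l < m such that d m ≥ lb l + t l; equivalently, the departure time of trip m is at least the minimum of lb l + t l over the V trips immediately preceding it. -/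
theorem Finset.exists_lt_map_eq_of_card_lt {ι β : Type*} [LinearOrder ι] [Fintype β]
    {s : Finset ι} (f : ι → β) (hs : Fintype.card β < s.card) :
    ∃ i ∈ s, ∃ j ∈ s, i < j ∧ f i = f j := by
  obtain ⟨x, hx, y, hy, hxy, hfxy⟩ :=
    Finset.exists_ne_map_eq_of_card_lt_of_maps_to (t := Finset.univ) (f := f)
      (by rwa [Finset.card_univ]) (fun _ _ => Finset.mem_univ _)
  rcases hxy.lt_or_gt with hlt | hlt
  · exact ⟨x, hx, y, hy, hlt, hfxy⟩
  · exact ⟨y, hy, x, hx, hlt, hfxy.symm⟩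

theorem subsequent_trips_overlapping_general
    (n V : ℕ)
    (a : Fin n → Fin V) (t : Fin n → ℝ)
    (d lb : Fin n → ℝ) (hlb : ∀ l, lb l ≤ d l)
    (hseq : ∀ i j : Fin n, i ≤ j → d i ≤ d j)
    (hveh : ∀ i j : Fin n, a i = a j → i < j → d i + t i ≤ d j)
    (m : Fin n) (hm : V ≤ (m : ℕ)) :
    ∃ l : Fin n, (m : ℕ) - V ≤ (l : ℕ) ∧ (l : ℕ) < (m : ℕ) ∧
      lb l + t l ≤ d m := by
  -- Among the `V + 1` trips `m - V, …, m` two share a vehicle; the earlier one is the witness.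
  let first : Fin n := ⟨m - V, by omega⟩
  obtain ⟨i, hi, j, hj, hij, hsame⟩ :=
    (Finset.Icc first m).exists_lt_map_eq_of_card_lt a
      (by simp only [Fintype.card_fin, Fin.card_Icc, first]; omega)
  rw [Finset.mem_Icc] at hi hj
  refine ⟨i, hi.1, hij.trans_le hj.2, ?_⟩
  calc lb i + t i ≤ d i + t i := by gcongr; exact hlb i
    _ ≤ d j := hveh i j hsame hij
    _ ≤ d m := hseq j m hj.2

/-- With `V` vehicles dispatching `n` trips in a fixed sequence (departures
nondecreasing along the sequence, and a vehicle can start a trip only after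
returning from its previous one), the departure time of trip `m` (with
`V ≤ m`) is at least `lb l + t l` for some of the `V` trips `l` immediately
preceding it. -/
theorem subsequent_trips_overlapping
    (n V : ℕ) (hV : 1 ≤ V)
    (a : Fin n → Fin V) (t : Fin n → ℝ) (ht : ∀ l, 0 ≤ t l)
    (d lb : Fin n → ℝ) (hlb : ∀ l, lb l ≤ d l)
    (hseq : ∀ i j : Fin n, i ≤ j → d i ≤ d j)
    (hveh : ∀ i j : Fin n, a i = a j → i < j → d i + t i ≤ d j)
    (m : Fin n) (hm : V ≤ (m : ℕ)) :
    ∃ l : Fin n, (m : ℕ) - V ≤ (l : ℕ) ∧ (l : ℕ) < (m : ℕ) ∧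
      lb l + t l ≤ d m :=
  subsequent_trips_overlapping_general n V a t d lb hlb hseq hveh m hm
end

section
/- Let n ∈ ℕ and let c, d : Fin n → ℝ both be monotone nondecreasing, where c k is the fixed arrival (completion) time of position k and d j is the due date of order j. Then the earliest-due-date assignment is optimal: for every permutation σ of Fin n, ∑_{k} max(0, c k − d k) ≤ ∑_{k} max(0, c k − d(σ k)). -/
/-!
Exchange argument. The cost `g i j := max 0 (c i - d j)` satisfies the Monge-type inequality
`g i j + g i' j' ≤ g i j' + g i' j` for `i ≤ i'`, `j ≤ j'`. Given `σ ≠ 1`, let `k` be the least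
point it moves and `j := σ⁻¹ k`; then `k < j` and `k < σ k`, so composing `σ` with the
transposition of `j` and `k` does not increase the total cost, fixes `k` and moves strictly fewer
points. Induction on the number of moved points finishes the proof.
-/

lemma max_zero_sub_add_max_zero_sub_le {c₁ c₂ d₁ d₂ : ℝ} (hc : c₁ ≤ c₂) (hd : d₁ ≤ d₂) :
    max 0 (c₁ - d₁) + max 0 (c₂ - d₂) ≤ max 0 (c₁ - d₂) + max 0 (c₂ - d₁) := by
  simp only [max_def]
  split_ifs <;> linarith

open Equiv Finset

section Monge

variable {ι M : Type*} [AddCommMonoid M] [PartialOrder M] [IsOrderedAddMonoid M]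

lemma sum_comp_mul_swap_le [Fintype ι] [DecidableEq ι] (g : ι → ι → M) (σ : Perm ι) {i j : ι}
    (hij : i ≠ j) (h : g i (σ j) + g j (σ i) ≤ g i (σ i) + g j (σ j)) :
    ∑ x, g x ((σ * swap i j) x) ≤ ∑ x, g x (σ x) := by
  rw [← sum_sdiff (subset_univ {i, j}), ← sum_sdiff (subset_univ {i, j}) (f := fun x ↦ g x (σ x)),
    sum_pair hij, sum_pair hij]
  refine add_le_add (sum_congr rfl fun x hx ↦ ?_).le ?_
  · simp only [mem_sdiff, mem_univ, mem_insert, mem_singleton, not_or, true_and] at hx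
    rw [Perm.mul_apply, swap_apply_of_ne_of_ne hx.1 hx.2]
  · simpa only [Perm.mul_apply, swap_apply_left, swap_apply_right] using h

variable [LinearOrder ι] [Fintype ι]

lemma exists_card_support_lt_and_sum_le {g : ι → ι → M}
    (hg : ∀ ⦃i i' j j'⦄, i ≤ i' → j ≤ j' → g i j + g i' j' ≤ g i j' + g i' j)
    {σ : Perm ι} (hσ : σ ≠ 1) :
    ∃ τ : Perm ι, #τ.support < #σ.support ∧ ∑ x, g x (τ x) ≤ ∑ x, g x (σ x) := by
  have hne : σ.support.Nonempty := by rwa [nonempty_iff_ne_empty, Ne, Perm.support_eq_empty_iff]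
  set k := σ.support.min' hne
  have hk : σ k ≠ k := Perm.mem_support.mp (σ.support.min'_mem hne)
  have hk_le {x : ι} (hx : σ x ≠ x) : k ≤ x := σ.support.min'_le x (Perm.mem_support.mpr hx)
  set j := σ⁻¹ k
  have hσj : σ j = k := σ.apply_symm_apply k
  have hjk : j ≠ k := fun h ↦ hk (h ▸ hσj)
  refine ⟨σ * swap j k, ?_, sum_comp_mul_swap_le g σ hjk ?_⟩
  · rw [mul_swap_eq_swap_mul, hσj]
    exact Perm.card_support_swap_mul hk
  · have hexchange := hg (hk_le (x := j) (hσj ▸ hjk.symm)) (hk_le (x := σ k) (σ.injective.ne hk))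
    rw [hσj, add_comm (g j (σ k)), add_comm (g j k)]
    exact hexchange

theorem sum_le_sum_comp_perm_of_monge {g : ι → ι → M}
    (hg : ∀ ⦃i i' j j'⦄, i ≤ i' → j ≤ j' → g i j + g i' j' ≤ g i j' + g i' j) (σ : Perm ι) :
    ∑ x, g x x ≤ ∑ x, g x (σ x) := by
  by_cases hσ : σ = 1
  · simp [hσ]
  obtain ⟨τ, hτ, hle⟩ := exists_card_support_lt_and_sum_le hg hσ
  exact (sum_le_sum_comp_perm_of_monge hg τ).trans hle
termination_by #σ.support

end Monge

/-- Earliest-due-date assignment is optimal: with fixed nondecreasing arrival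
times `c` and nondecreasing due dates `d`, matching earlier arrivals with
earlier due dates minimizes the total tardiness over all bijective
assignments. -/
theorem edd_assignment_minimizes_total_tardiness
    (n : ℕ) (c d : Fin n → ℝ) (hc : Monotone c) (hd : Monotone d)
    (σ : Equiv.Perm (Fin n)) :
    (∑ k : Fin n, max 0 (c k - d k)) ≤
      (∑ k : Fin n, max 0 (c k - d (σ k))) :=
  sum_le_sum_comp_perm_of_monge (g := fun i j ↦ max 0 (c i - d j))
    (fun _ _ _ _ hi hj ↦ max_zero_sub_add_max_zero_sub_le (hc hi) (hd hj)) σ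
end
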